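/- arXiv:2505.05792 — 6 statements merged into one kernel-verified Lean document; each statement's English description precedes it below -/
import Mathlib

section
/- Let λ₁, λ₂ be the two complex roots of λ² − Hλ − F = 0 where H, F ∈ ℂ. Then both roots have strictly positive real part if and only if Re H > 0 and Re H · Re(conj(H)·F) + (Im F)² < 0. -/
/-- Let `λ₁, λ₂` be the two complex roots of `λ² − Hλ − F = 0`
(i.e. `λ₁ + λ₂ = H`, `λ₁λ₂ = −F`). Both roots have strictly positive real part iff
`Re H > 0` and `Re H · Re(conj(H)·F) + (Im F)² < 0`. -/
theorem stmt1 (H F lam1 lam2 : ℂ)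
    (hsum : lam1 + lam2 = H) (hprod : lam1 * lam2 = -F) :
    (0 < lam1.re ∧ 0 < lam2.re) ↔
      (0 < H.re ∧ H.re * ((starRingEnd ℂ) H * F).re + F.im ^ 2 < 0) := by
  have hF : F = -(lam1 * lam2) := by rw [hprod, neg_neg]
  subst hsum hF
  set a := lam1.re with ha
  set b := lam1.im with hb
  set c := lam2.re with hc
  set d := lam2.im with hd
  simp only [Complex.add_re, Complex.add_im, Complex.neg_re, Complex.neg_im,
    Complex.mul_re, Complex.mul_im, Complex.conj_re, Complex.conj_im, ← ha, ← hb, ← hc, ← hd]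
  constructor
  · rintro ⟨h1, h2⟩
    constructor
    · linarith
    · nlinarith [sq_nonneg (b - d), sq_nonneg (a + c), mul_pos h1 h2, mul_pos (mul_pos h1 h2) (add_pos h1 h2)]
  · rintro ⟨h1, h2⟩
    have key : a * c * ((a + c) ^ 2 + (b - d) ^ 2) > 0 := by nlinarith
    have hS : (0:ℝ) < (a + c) ^ 2 + (b - d) ^ 2 := by positivity
    have hac : 0 < a * c := by nlinarith
    constructor <;> nlinarith
end

section
/- For all natural numbers m ≥ n ≥ 0 and all real θ: Σ_k binom(m, n+k) binom(m, n−k) cos(kθ) = Σ_k binom(m, m−k) binom(2k, 2n) sin^{2(m−k)}(θ/2) cos^{2(k−n)}(θ/2), where sums range over all integers k (with binom(a,b)=0 when b<0 or b>a). -/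
open Polynomial Finset

/-- Binomial coefficient `choose m j` extended to integer lower index, with the
convention that it vanishes for `j < 0` (and automatically for `j > m`). -/
def ch (m : ℕ) (j : ℤ) : ℕ := if 0 ≤ j then m.choose j.toNat else 0

lemma ch_neg {m : ℕ} {j : ℤ} (h : j < 0) : ch m j = 0 := by
  simp [ch, not_le.2 h]

lemma ch_big {m : ℕ} {j : ℤ} (h : (m:ℤ) < j) : ch m j = 0 := by
  rw [ch, if_pos (by omega)]
  exact Nat.choose_eq_zero_of_lt (by omega)

lemma ch_coe (m j : ℕ) : ch m (j:ℤ) = m.choose j := by simp [ch]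

lemma ch_symm (m : ℕ) (j : ℤ) : ch m j = ch m ((m:ℤ) - j) := by
  rcases lt_or_ge j 0 with h | h
  · rw [ch_neg h, ch_big (by omega)]
  rcases le_or_gt j (m:ℤ) with h2 | h2
  · rw [ch, if_pos h, ch, if_pos (by omega)]
    have : ((m:ℤ) - j).toNat = m - j.toNat := by omega
    rw [this, Nat.choose_symm (by omega)]
  · rw [ch_big h2, ch_neg (by omega)]

lemma coeffA (a : ℂ) (m i : ℕ) : ((1 + C a * X : ℂ[X])^m).coeff i = m.choose i * a^i := by
  rw [add_pow, finset_sum_coeff]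
  have key : ∀ b ∈ Finset.range (m+1),
      ((1:ℂ[X])^b * (C a * X)^(m-b) * ((m.choose b : ℕ) : ℂ[X])).coeff i
        = if i = m - b then a^(m-b) * m.choose b else 0 := by
    intro b _
    rw [one_pow, one_mul, mul_pow, ← C_pow, ← C_eq_natCast, mul_right_comm, ← C_mul,
      coeff_C_mul, coeff_X_pow]
    split <;> simp
  rw [Finset.sum_congr rfl key]
  by_cases hi : i ≤ m
  · rw [Finset.sum_eq_single (m - i)]
    · rw [if_pos (by omega), Nat.sub_sub_self hi, Nat.choose_symm hi, mul_comm]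
    · intro b hb hne; rw [if_neg]; simp only [mem_range] at hb; omega
    · intro h; simp only [mem_range] at h; omega
  · rw [Nat.choose_eq_zero_of_lt (by omega), Finset.sum_eq_zero]
    · simp
    · intro b hb; rw [if_neg]; simp only [mem_range] at hb; omega

lemma cos_as_exp (θ : ℝ) (k : ℤ) :
    Complex.cos (k * θ) =
      (Complex.exp ((θ/2:ℝ) * Complex.I) ^ (2*k)
        + Complex.exp ((θ/2:ℝ) * Complex.I) ^ (-(2*k))) / 2 := by
  rw [Complex.cos, ← Complex.exp_int_mul, ← Complex.exp_int_mul]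
  congr 2 <;> push_cast <;> ring

lemma sum_symm_exp (M : ℕ) (a : ℤ → ℂ) (ha : ∀ k, a (-k) = a k) (θ : ℝ) :
    ∑ k ∈ Finset.Icc (-(M:ℤ)) M, a k * Complex.cos (k * θ)
      = ∑ k ∈ Finset.Icc (-(M:ℤ)) M, a k * Complex.exp ((θ/2:ℝ) * Complex.I) ^ (2*k) := by
  set u := Complex.exp ((θ/2:ℝ) * Complex.I) with hu
  have hneg : ∑ k ∈ Finset.Icc (-(M:ℤ)) M, a k * u ^ (-(2*k))
      = ∑ k ∈ Finset.Icc (-(M:ℤ)) M, a k * u ^ (2*k) := by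
    refine Finset.sum_nbij' (fun k => -k) (fun k => -k) ?_ ?_ ?_ ?_ ?_
    · intro x hx; simp only [Finset.mem_Icc] at *; omega
    · intro x hx; simp only [Finset.mem_Icc] at *; omega
    · intro x _; ring
    · intro x _; ring
    · intro x _; rw [ha]; ring_nf
  calc ∑ k ∈ Finset.Icc (-(M:ℤ)) M, a k * Complex.cos (k * θ)
      = ∑ k ∈ Finset.Icc (-(M:ℤ)) M, (a k * u ^ (2*k) + a k * u ^ (-(2*k))) / 2 := by
        refine Finset.sum_congr rfl fun k _ => ?_
        rw [cos_as_exp]; ring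
    _ = ((∑ k ∈ Finset.Icc (-(M:ℤ)) M, a k * u ^ (2*k))
          + ∑ k ∈ Finset.Icc (-(M:ℤ)) M, a k * u ^ (-(2*k))) / 2 := by
        rw [← Finset.sum_add_distrib, ← Finset.sum_div]
    _ = _ := by rw [hneg]; ring

/-- For `m ≥ n ≥ 0` and all real `θ`,
`Σ_k binom(m,n+k) binom(m,n−k) cos(kθ)
  = Σ_k binom(m,m−k) binom(2k,2n) sin^{2(m−k)}(θ/2) cos^{2(k−n)}(θ/2)`. -/
theorem stmt2 (m n : ℕ) (hmn : n ≤ m) (θ : ℝ) :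
    ∑ k ∈ Finset.Icc (-(m : ℤ)) (m : ℤ),
        ((ch m ((n : ℤ) + k) * ch m ((n : ℤ) - k) : ℕ) : ℝ) * Real.cos (k * θ) =
      ∑ k ∈ Finset.Icc n m,
        ((m.choose (m - k) * (2 * k).choose (2 * n) : ℕ) : ℝ) *
          Real.sin (θ / 2) ^ (2 * (m - k)) * Real.cos (θ / 2) ^ (2 * (k - n)) := by
  set c : ℝ := Real.cos (θ/2) with hcdef
  set s : ℝ := Real.sin (θ/2) with hsdef
  have hs2c2 : s^2 + c^2 = 1 := Real.sin_sq_add_cos_sq _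
  set u : ℂ := Complex.exp ((θ/2:ℝ) * Complex.I) with hudef
  set v : ℂ := Complex.exp (-((θ/2:ℝ) * Complex.I)) with hvdef
  have hu0 : u ≠ 0 := Complex.exp_ne_zero _
  have huv : u * v = 1 := by
    rw [hudef, hvdef, ← Complex.exp_add, add_neg_cancel, Complex.exp_zero]
  have hsum : u + v = 2 * (c:ℂ) := by
    rw [hcdef, Complex.ofReal_cos, Complex.cos, hudef, hvdef]
    push_cast
    ring
  have hvpow : ∀ t : ℕ, u ^ t * v ^ t = 1 := by
    intro t; rw [← mul_pow, huv, one_pow]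
  -- the two "coefficient" numbers
  set N : ℕ := 2 * (m - n) with hN
  have hmnn : m - n + n = m := by omega
  have hmn' : ((m - n : ℕ) : ℤ) = (m:ℤ) - (n:ℤ) := by omega
  have hN' : (N : ℤ) = 2*((m:ℤ) - (n:ℤ)) := by rw [hN]; push_cast [hmn']; ring
  -- complexified statement
  rw [← Complex.ofReal_inj]
  push_cast [Complex.ofReal_cos, Complex.ofReal_sin]
  -- now a complex identity
  calc ∑ k ∈ Finset.Icc (-(m : ℤ)) (m : ℤ),
          ((ch m ((n : ℤ) + k) : ℂ) * (ch m ((n : ℤ) - k) : ℂ)) * Complex.cos (k * θ)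
      = ∑ k ∈ Finset.Icc (-(m : ℤ)) (m : ℤ),
          (fun k : ℤ => ((ch m (((m-n : ℕ) : ℤ) + k) * ch m (((m-n : ℕ) : ℤ) - k) : ℕ) : ℂ)) k
            * Complex.cos (k * θ) := by
        refine Finset.sum_congr rfl fun k _ => ?_
        have h1 : ch m ((n : ℤ) + k) = ch m (((m-n : ℕ) : ℤ) - k) := by
          rw [ch_symm m ((n:ℤ) + k)]; congr 1; omega
        have h2 : ch m ((n : ℤ) - k) = ch m (((m-n : ℕ) : ℤ) + k) := by
          rw [ch_symm m ((n:ℤ) - k)]; congr 1; omega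
        rw [h1, h2]; push_cast; ring
    _ = ∑ k ∈ Finset.Icc (-(m : ℤ)) (m : ℤ),
          ((ch m (((m-n : ℕ) : ℤ) + k) * ch m (((m-n : ℕ) : ℤ) - k) : ℕ) : ℂ) * u ^ (2*k) := by
        rw [sum_symm_exp]
        intro k
        rw [show ((m-n:ℕ):ℤ) + -k = ((m-n:ℕ):ℤ) - k from by ring,
          show ((m-n:ℕ):ℤ) - -k = ((m-n:ℕ):ℤ) + k from by ring]
        push_cast
        ring
    _ = ∑ j ∈ Finset.Icc (0:ℤ) (N:ℤ),
          ((ch m j * ch m ((N:ℤ) - j) : ℕ) : ℂ) * u ^ (2*(j - (m-n : ℕ))) := by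
        rw [show ∑ k ∈ Finset.Icc (-(m : ℤ)) (m : ℤ),
              ((ch m (((m-n : ℕ) : ℤ) + k) * ch m (((m-n : ℕ) : ℤ) - k) : ℕ) : ℂ) * u ^ (2*k)
            = ∑ j ∈ Finset.Icc (((m-n:ℕ):ℤ) - m) (((m-n:ℕ):ℤ) + m),
              ((ch m j * ch m ((N:ℤ) - j) : ℕ) : ℂ) * u ^ (2*(j - (m-n : ℕ))) from ?_]
        · refine (Finset.sum_subset ?_ ?_).symm
          · intro x hx; simp only [Finset.mem_Icc] at *; omega
          · intro x hx hnx
            simp only [Finset.mem_Icc, not_and, not_le] at hx hnx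
            rcases lt_or_ge x 0 with h | h
            · rw [ch_neg h]; simp
            · rw [ch_neg (show (N:ℤ) - x < 0 from by omega)]; simp
        · refine Finset.sum_nbij' (fun k => k + ((m-n:ℕ):ℤ)) (fun j => j - ((m-n:ℕ):ℤ))
            ?_ ?_ ?_ ?_ ?_
          · intro x hx; simp only [Finset.mem_Icc] at *; omega
          · intro x hx; simp only [Finset.mem_Icc] at *; omega
          · intro x _; ring
          · intro x _; ring
          · intro x _
            rw [show ((m-n:ℕ):ℤ) + x = x + ((m-n:ℕ):ℤ) from by ring,
              show ((m-n:ℕ):ℤ) - x = (N:ℤ) - (x + ((m-n:ℕ):ℤ)) from by omega,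
              show (2*x : ℤ) = 2*((x + ((m-n:ℕ):ℤ)) - ((m-n:ℕ):ℤ)) from by ring]
    _ = ∑ j ∈ Finset.range (N+1),
          ((m.choose j * m.choose (N - j) : ℕ) : ℂ) * (u ^ j * v ^ (N - j)) := by
        refine Finset.sum_nbij' (fun j => j.toNat) (fun j => (j:ℤ)) ?_ ?_ ?_ ?_ ?_
        · intro x hx; simp only [Finset.mem_Icc, Finset.mem_range] at *; omega
        · intro x hx; simp only [Finset.mem_Icc, Finset.mem_range] at *; omega
        · intro x hx; simp only [Finset.mem_Icc] at hx; omega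
        · intro x _; simp
        · intro x hx
          simp only [Finset.mem_Icc] at hx
          have h1 : ch m x = m.choose x.toNat := by rw [ch, if_pos hx.1]
          have h2 : ch m ((N:ℤ) - x) = m.choose (N - x.toNat) := by
            rw [ch, if_pos (by omega)]
            congr 1
            omega
          have h3 : u ^ (2*(x - ((m-n:ℕ):ℤ))) = u ^ x.toNat * v ^ (N - x.toNat) := by
            have hv' : v ^ (N - x.toNat) = (u ^ (N - x.toNat))⁻¹ :=
              eq_inv_of_mul_eq_one_right (hvpow _)
            rw [hv', ← zpow_natCast u x.toNat, ← zpow_natCast u (N - x.toNat), ← zpow_neg,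
              ← zpow_add₀ hu0]
            congr 1
            omega
          rw [h1, h2, h3]
    _ = ((1 + C u * X : ℂ[X])^m * (1 + C v * X : ℂ[X])^m).coeff N := by
        rw [Polynomial.coeff_mul, Finset.Nat.sum_antidiagonal_eq_sum_range_succ_mk]
        refine Finset.sum_congr rfl fun j hj => ?_
        rw [coeffA, coeffA]
        push_cast
        ring
    _ = (((1 + C (c:ℂ) * X : ℂ[X])^2 + C ((s:ℂ)^2) * X^2)^m).coeff N := by
        congr 1
        rw [← mul_pow]
        congr 1
        have hC1 : C u + C v = 2 * C (c:ℂ) := by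
          rw [← C_add, hsum, C_mul, map_ofNat]
        have hC2 : C u * C v = 1 := by rw [← C_mul, huv, C_1]
        have hC3 : (C (c:ℂ))^2 + C ((s:ℂ)^2) = 1 := by
          have hcs : (c:ℂ)^2 + (s:ℂ)^2 = 1 := by
            exact_mod_cast congrArg (fun x : ℝ => (x : ℂ)) (by linarith [hs2c2] : c^2 + s^2 = (1:ℝ))
          rw [← C_pow, ← C_add, hcs, C_1]
        linear_combination (X:ℂ[X]) * hC1 + X^2 * hC2 - X^2 * hC3
    _ = ∑ k ∈ Finset.Icc n m,
          ((m.choose (m - k) : ℂ) * ((2 * k).choose (2 * n) : ℂ)) *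
            (s:ℂ) ^ (2 * (m - k)) * (c:ℂ) ^ (2 * (k - n)) := by
        rw [add_pow, finset_sum_coeff]
        have key : ∀ k ∈ Finset.range (m+1),
            ((((1 + C (c:ℂ) * X : ℂ[X])^2)^k * (C ((s:ℂ)^2) * X^2)^(m-k)
              * ((m.choose k : ℕ) : ℂ[X])).coeff N)
            = if 2*(m-k) ≤ N then
                ((m.choose k : ℂ) * ((2*k).choose (N - 2*(m-k)) : ℂ))
                  * (s:ℂ)^(2*(m-k)) * (c:ℂ)^(N - 2*(m-k))
              else 0 := by
          intro k _
          have hre : (((1 + C (c:ℂ) * X : ℂ[X])^2)^k * (C ((s:ℂ)^2) * X^2)^(m-k)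
              * ((m.choose k : ℕ) : ℂ[X]))
              = (C (((s:ℂ)^2)^(m-k) * (m.choose k : ℂ)) * (1 + C (c:ℂ) * X)^(2*k))
                  * X^(2*(m-k)) := by
            rw [← pow_mul, mul_pow, ← C_pow, ← pow_mul, ← C_eq_natCast, C_mul]
            ring
          rw [hre, Polynomial.coeff_mul_X_pow', coeff_C_mul, coeffA]
          split
          · rw [← pow_mul]
            ring
          · rfl
        rw [Finset.sum_congr rfl key]
        have hsub : Finset.Icc n m ⊆ Finset.range (m+1) := by
          intro x hx; simp only [Finset.mem_Icc, Finset.mem_range] at *; omega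
        rw [← Finset.sum_subset hsub (by
          intro x hx hnx
          simp only [Finset.mem_Icc, Finset.mem_range, not_and, not_le] at hx hnx
          rw [if_neg]
          omega)]
        refine Finset.sum_congr rfl fun k hk => ?_
        simp only [Finset.mem_Icc] at hk
        rw [if_pos (by omega)]
        have e1 : N - 2*(m-k) = 2*(k-n) := by omega
        have e2 : m.choose k = m.choose (m-k) := (Nat.choose_symm hk.2).symm
        have e3 : (2*k).choose (2*(k-n)) = (2*k).choose (2*n) := by
          rw [show 2*(k-n) = 2*k - 2*n from by omega, Nat.choose_symm (by omega)]
        rw [e1, e2, e3]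
end

section
/- For all natural numbers m ≥ n ≥ 0: Σ_k binom(m, n+k) binom(m, n−k) cos(kπ) = binom(m, n), i.e., Σ_k (−1)^k binom(m, n+k) binom(m, n−k) = binom(m, n). -/
open Polynomial Finset

lemma coeff_one_sub_X_pow (m j : ℕ) :
    ((1 - X : ℤ[X]) ^ m).coeff j = (-1) ^ j * m.choose j := by
  induction m generalizing j with
  | zero =>
    cases j <;> simp [coeff_one]
  | succ m ih =>
    have : ((1 - X : ℤ[X]) ^ (m + 1)) = (1 - X) ^ m - (1 - X) ^ m * X := by
      ring
    rw [this, coeff_sub]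
    cases j with
    | zero => simp [ih]
    | succ j =>
      rw [coeff_mul_X, ih, ih, Nat.choose_succ_succ]
      push_cast
      ring

lemma key (m n : ℕ) :
    ∑ j ∈ Finset.range (2 * n + 1),
      (-1 : ℤ) ^ j * m.choose j * m.choose (2 * n - j) = (-1) ^ n * m.choose n := by
  have h1 : ((1 - X : ℤ[X]) ^ m * (1 + X) ^ m).coeff (2 * n) =
      ∑ j ∈ Finset.range (2 * n + 1),
        (-1 : ℤ) ^ j * m.choose j * m.choose (2 * n - j) := by
    rw [coeff_mul, Finset.Nat.sum_antidiagonal_eq_sum_range_succ_mk]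
    refine Finset.sum_congr rfl fun j _ => ?_
    rw [coeff_one_sub_X_pow, coeff_one_add_X_pow, mul_assoc]
  have h2 : ((1 - X : ℤ[X]) ^ m * (1 + X) ^ m) = Polynomial.expand ℤ 2 ((1 - X) ^ m) := by
    rw [map_pow, map_sub, map_one, expand_X, ← mul_pow]
    ring_nf
  rw [h2, Polynomial.coeff_expand (by norm_num : 0 < 2)] at h1
  simp only [Nat.mul_div_cancel_left n (by norm_num : 0 < 2), dvd_mul_right, if_true] at h1
  rw [coeff_one_sub_X_pow] at h1
  exact h1.symm


/-- For `m ≥ n ≥ 0`,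
`Σ_k binom(m,n+k) binom(m,n−k) cos(kπ) = binom(m,n)`,
i.e. `Σ_k (−1)^k binom(m,n+k) binom(m,n−k) = binom(m,n)`. -/
theorem stmt3 (m n : ℕ) (hmn : n ≤ m) :
    ∑ k ∈ Finset.Icc (-(m : ℤ)) (m : ℤ),
        ((ch m ((n : ℤ) + k) * ch m ((n : ℤ) - k) : ℕ) : ℝ) * Real.cos (k * Real.pi) =
      (m.choose n : ℝ) := by
  have hcos : ∀ k : ℤ, Real.cos (k * Real.pi) = (-1 : ℝ) ^ k := by
    intro k
    simpa using Real.cos_int_mul_pi_sub 0 k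
  simp only [hcos]
  have hsub : Finset.Icc (-(n : ℤ)) (n : ℤ) ⊆ Finset.Icc (-(m : ℤ)) (m : ℤ) := by
    apply Finset.Icc_subset_Icc <;> omega
  rw [← Finset.sum_subset hsub]
  · -- sum over Icc(-n, n)
    rw [Finset.sum_nbij' (i := fun k : ℤ => ((n : ℤ) + k).toNat)
        (j := fun j : ℕ => (j : ℤ) - n)
        (g := fun j : ℕ => (-1 : ℝ) ^ n *
          ((-1 : ℝ) ^ j * m.choose j * m.choose (2 * n - j)))
        (t := Finset.range (2 * n + 1))]
    · have kr : ∑ j ∈ Finset.range (2 * n + 1),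
          (-1 : ℝ) ^ j * m.choose j * m.choose (2 * n - j)
          = (-1 : ℝ) ^ n * m.choose n := by
        have := key m n
        have := congrArg (Int.cast : ℤ → ℝ) this
        push_cast at this
        simpa using this
      rw [← Finset.mul_sum, kr, ← mul_assoc, ← pow_add,
        show n + n = 2 * n by ring, pow_mul]
      norm_num
    · intro k hk
      simp only [Finset.mem_Icc] at hk
      simp only [Finset.mem_range]
      omega
    · intro j hj
      simp only [Finset.mem_range] at hj
      simp only [Finset.mem_Icc]
      omega
    · intro k hk
      simp only [Finset.mem_Icc] at hk
      omega
    · intro j hj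
      simp only [Finset.mem_range] at hj
      omega
    · intro k hk
      simp only [Finset.mem_Icc] at hk
      set j : ℕ := ((n : ℤ) + k).toNat with hj
      have hj1 : (j : ℤ) = (n : ℤ) + k := by omega
      have hj2 : j ≤ 2 * n := by omega
      have hch1 : ch m ((n : ℤ) + k) = m.choose j := by
        rw [ch, if_pos (by omega)]
      have hch2 : ch m ((n : ℤ) - k) = m.choose (2 * n - j) := by
        rw [ch, if_pos (by omega)]
        congr 1
        omega
      rw [hch1, hch2]
      have hun : (-1 : ℝ) ^ n * (-1 : ℝ) ^ n = 1 := by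
        rw [← pow_add, show n + n = 2 * n by ring, pow_mul]; norm_num
      have h2 : (-1 : ℝ) ^ (j : ℤ) = (-1 : ℝ) ^ k * (-1 : ℝ) ^ (n : ℤ) := by
        rw [show (j : ℤ) = k + (n : ℤ) by omega,
          zpow_add₀ (by norm_num : (-1 : ℝ) ≠ 0)]
      rw [zpow_natCast, zpow_natCast] at h2
      have hsign : (-1 : ℝ) ^ k = (-1 : ℝ) ^ n * (-1 : ℝ) ^ j := by
        have h3 : (-1 : ℝ) ^ n * (-1 : ℝ) ^ j = (-1 : ℝ) ^ k * ((-1 : ℝ) ^ n * (-1 : ℝ) ^ n) := by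
          rw [h2]; ring
        rw [hun, mul_one] at h3
        exact h3.symm
      rw [hsign]
      push_cast
      ring
  · intro k hk hk'
    simp only [Finset.mem_Icc] at hk hk'
    have : ch m ((n : ℤ) + k) * ch m ((n : ℤ) - k) = 0 := by
      rcases lt_or_ge ((n : ℤ) + k) 0 with h | h
      · rw [ch, if_neg (by omega)]; ring
      · simp only [ch]
        rw [if_neg (show ¬ (0:ℤ) ≤ (n : ℤ) - k by omega)]
        ring
    rw [this]
    simp
end

section
/- For every non-negative integer n: Σ_{k=0}^{2n+1} (−1)^k H_k binom(2n+1, k)² = (−1)^{n+1} · 2^{4n} · (n!)² / (2n+1)!, where H_k = 1 + 1/2 + ⋯ + 1/k is the k-th harmonic number (H_0 = 0). -/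
/-- The `k`-th harmonic number `H_k = 1 + 1/2 + ⋯ + 1/k` (with `H_0 = 0`), as a real number. -/
noncomputable def Hnum (k : ℕ) : ℝ := ∑ i ∈ Finset.range k, (1 : ℝ) / (i + 1)

open Finset

noncomputable def tt (n j : ℕ) : ℝ :=
  (-1) ^ j * ((2 * n + 1).choose j : ℝ) / (2 * (n : ℝ) + 1 - 2 * j)

noncomputable def pp (n j : ℕ) : ℝ :=
  -4 * (j : ℝ) ^ 3 + (20 * (n : ℝ) + 24) * (j : ℝ) ^ 2
    - (36 * (n : ℝ) ^ 2 + 84 * n + 47) * j + (2 * (n : ℝ) + 1) * (2 * n + 3) * (5 * n + 6)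

noncomputable def GG (n j : ℕ) : ℝ :=
  (-1) ^ (j + 1) * 2 * j * pp n j * ((2 * n + 3).choose j : ℝ) /
    ((2 * (n : ℝ) + 3 - 2 * j) * (2 * (n : ℝ) + 1 - 2 * j) * (2 * (n : ℝ) + 2) * (2 * (n : ℝ) + 3))

lemma odd_ne (a b : ℕ) : 2 * (a : ℝ) + 1 - 2 * b ≠ 0 := by
  intro h
  have h' : 2 * (a : ℝ) + 1 = 2 * b := by linarith
  have : 2 * (a : ℤ) + 1 = 2 * b := by exact_mod_cast h'
  omega

lemma ch_succ_row (N j : ℕ) :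
    ((N : ℝ) + 1) * (N.choose j : ℝ) = ((N : ℝ) + 1 - j) * ((N + 1).choose j : ℝ) := by
  rcases le_or_gt j (N + 1) with h | h
  · have := Nat.choose_mul_succ_eq N j
    have hc : (N.choose j : ℝ) * ((N : ℝ) + 1) = ((N + 1).choose j : ℝ) * (((N + 1 - j : ℕ) : ℝ)) := by
      exact_mod_cast congrArg (fun x : ℕ => (x : ℝ)) this
    rw [Nat.cast_sub h] at hc
    push_cast at hc ⊢
    linarith
  · rw [Nat.choose_eq_zero_of_lt (by omega), Nat.choose_eq_zero_of_lt (by omega)]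
    simp

lemma ch_succ_col (N j : ℕ) :
    ((j : ℝ) + 1) * (N.choose (j + 1) : ℝ) = ((N : ℝ) - j) * (N.choose j : ℝ) := by
  rcases le_or_gt j N with h | h
  · have := Nat.choose_succ_right_eq N j
    have hc : (N.choose (j + 1) : ℝ) * ((j : ℝ) + 1) = (N.choose j : ℝ) * ((N - j : ℕ) : ℝ) := by
      exact_mod_cast congrArg (fun x : ℕ => (x : ℝ)) this
    rw [Nat.cast_sub h] at hc
    linarith
  · rw [Nat.choose_eq_zero_of_lt (by omega), Nat.choose_eq_zero_of_lt (by omega)]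
    simp

set_option maxHeartbeats 1000000 in
lemma key_s5 (n j : ℕ) :
    (2 * (n : ℝ) + 3) * tt (n + 1) j + 8 * ((n : ℝ) + 1) * tt n j = GG n (j + 1) - GG n j := by
  have h21 : 2 * (n + 1) + 1 = 2 * n + 3 := by ring
  have hj1 : (j : ℝ) + 1 ≠ 0 := by positivity
  have hn2 : 2 * (n : ℝ) + 2 ≠ 0 := by positivity
  have hn3 : 2 * (n : ℝ) + 3 ≠ 0 := by positivity
  have dA : 2 * (n : ℝ) + 3 - 2 * j ≠ 0 := by
    intro h; apply odd_ne (n + 1) j; push_cast; linarith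
  have dB : 2 * (n : ℝ) + 1 - 2 * j ≠ 0 := odd_ne n j
  have dC : 2 * (n : ℝ) - 1 - 2 * j ≠ 0 := by
    intro h; apply odd_ne n (j + 1); push_cast; linarith
  -- choose relations
  have hz : (2 * (n : ℝ) + 2) * (2 * (n : ℝ) + 3) * ((2 * n + 1).choose j : ℝ)
      = (2 * (n : ℝ) + 3 - j) * (2 * (n : ℝ) + 2 - j) * ((2 * n + 3).choose j : ℝ) := by
    have h1 := ch_succ_row (2 * n + 1) j
    have h2 := ch_succ_row (2 * n + 2) j
    push_cast at h1 h2
    have e1 : 2 * (n : ℝ) + 1 + 1 = 2 * (n : ℝ) + 2 := by ring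
    have e2 : 2 * (n : ℝ) + 2 + 1 = 2 * (n : ℝ) + 3 := by ring
    nlinarith [h1, h2]
  have hy : ((j : ℝ) + 1) * ((2 * n + 3).choose (j + 1) : ℝ)
      = (2 * (n : ℝ) + 3 - j) * ((2 * n + 3).choose j : ℝ) := by
    have h := ch_succ_col (2 * n + 3) j
    push_cast at h
    linarith
  set x : ℝ := ((2 * n + 3).choose j : ℝ) with hx
  -- rewrite the four pieces as x-only fractions
  have t1 : (2 * (n : ℝ) + 3) * tt (n + 1) j
      = ((2 * (n : ℝ) + 3) * ((-1) ^ j * x)) / (2 * (n : ℝ) + 3 - 2 * j) := by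
    unfold tt; rw [h21]; push_cast
    rw [← mul_div_assoc,
      div_eq_div_iff (show 2 * ((n:ℝ) + 1) + 1 - 2 * (j:ℝ) ≠ 0 by intro h; apply dA; linarith) dA]
    ring
  have t2 : 8 * ((n : ℝ) + 1) * tt n j
      = (8 * ((n : ℝ) + 1) * ((-1) ^ j * ((2 * (n : ℝ) + 3 - j) * (2 * (n : ℝ) + 2 - j) * x)))
        / ((2 * (n : ℝ) + 1 - 2 * j) * ((2 * (n : ℝ) + 2) * (2 * (n : ℝ) + 3))) := by
    unfold tt; push_cast
    rw [← mul_div_assoc, div_eq_div_iff dB (mul_ne_zero dB (mul_ne_zero hn2 hn3))]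
    linear_combination (8 * ((n:ℝ) + 1) * (-1)^j * (2 * (n:ℝ) + 1 - 2 * j)) * hz
  have g2 : GG n j
      = ((-1) ^ (j + 1) * 2 * j * pp n j * x) /
        ((2 * (n : ℝ) + 3 - 2 * j) * (2 * (n : ℝ) + 1 - 2 * j) * (2 * (n : ℝ) + 2) * (2 * (n : ℝ) + 3)) := by
    unfold GG; rw [hx]
  have g1 : GG n (j + 1)
      = ((-1) ^ j * 2 * pp n (j + 1) * ((2 * (n : ℝ) + 3 - j) * x)) /
        ((2 * (n : ℝ) + 1 - 2 * j) * (2 * (n : ℝ) - 1 - 2 * j) * (2 * (n : ℝ) + 2) * (2 * (n : ℝ) + 3)) := by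
    unfold GG; push_cast
    rw [div_eq_div_iff
      (by intro h
          rcases mul_eq_zero.1 h with h' | h'
          · rcases mul_eq_zero.1 h' with h'' | h''
            · rcases mul_eq_zero.1 h'' with h3 | h3
              · exact dB (by linarith)
              · exact dC (by linarith)
            · exact hn2 h''
          · exact hn3 h')
      (by intro h
          rcases mul_eq_zero.1 h with h' | h'
          · rcases mul_eq_zero.1 h' with h'' | h''
            · rcases mul_eq_zero.1 h'' with h3 | h3
              · exact dB h3
              · exact dC h3
            · exact hn2 h''
          · exact hn3 h')]
    unfold pp; push_cast
    linear_combination ((-1:ℝ)^j * (-1) * (-1) * 2 *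
      (-4 * ((j:ℝ)+1) ^ 3 + (20 * (n:ℝ) + 24) * ((j:ℝ)+1) ^ 2
        - (36 * (n:ℝ) ^ 2 + 84 * n + 47) * ((j:ℝ)+1) + (2 * (n:ℝ) + 1) * (2 * n + 3) * (5 * n + 6)) *
      ((2 * (n:ℝ) + 1 - 2 * j) * (2 * (n:ℝ) - 1 - 2 * j) * (2 * (n:ℝ) + 2) * (2 * (n:ℝ) + 3))) * hy
  rw [t1, t2, g1, g2]
  rw [div_add_div _ _ dA (mul_ne_zero dB (mul_ne_zero hn2 hn3)),
    div_sub_div _ _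
      (mul_ne_zero (mul_ne_zero (mul_ne_zero dB dC) hn2) hn3)
      (mul_ne_zero (mul_ne_zero (mul_ne_zero dA dB) hn2) hn3),
    div_eq_div_iff
      (mul_ne_zero dA (mul_ne_zero dB (mul_ne_zero hn2 hn3)))
      (mul_ne_zero (mul_ne_zero (mul_ne_zero (mul_ne_zero dB dC) hn2) hn3)
        (mul_ne_zero (mul_ne_zero (mul_ne_zero dA dB) hn2) hn3))]
  unfold pp
  push_cast
  ring

noncomputable def Tp (n : ℕ) : ℝ := ∑ j ∈ Finset.range (2 * n + 2), tt n j

lemma tt_zero (n j : ℕ) (h : 2 * n + 1 < j) : tt n j = 0 := by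
  unfold tt; rw [Nat.choose_eq_zero_of_lt h]; simp

lemma GG_zero_left (n : ℕ) : GG n 0 = 0 := by unfold GG; simp

lemma GG_zero_right (n : ℕ) : GG n (2 * n + 4) = 0 := by
  unfold GG; rw [Nat.choose_eq_zero_of_lt (by omega)]; simp

lemma step (n : ℕ) : (2 * (n : ℝ) + 3) * Tp (n + 1) + 8 * ((n : ℝ) + 1) * Tp n = 0 := by
  have hs : ∑ j ∈ Finset.range (2 * n + 4),
      ((2 * (n : ℝ) + 3) * tt (n + 1) j + 8 * ((n : ℝ) + 1) * tt n j)
      = GG n (2 * n + 4) - GG n 0 := by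
    simp_rw [key_s5]
    exact Finset.sum_range_sub (GG n) (2 * n + 4)
  rw [GG_zero_left, GG_zero_right, sub_zero] at hs
  have e1 : ∑ j ∈ Finset.range (2 * n + 4), tt (n + 1) j = Tp (n + 1) := by
    unfold Tp
    congr 1
  have e2 : ∑ j ∈ Finset.range (2 * n + 4), tt n j = Tp n := by
    have h4 : 2 * n + 4 = (2 * n + 2) + 1 + 1 := by ring
    rw [h4, Finset.sum_range_succ, Finset.sum_range_succ,
      tt_zero n (2 * n + 2 + 1) (by omega), tt_zero n (2 * n + 2) (by omega)]
    unfold Tp; ring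
  rw [← e1, ← e2, Finset.mul_sum, Finset.mul_sum, ← Finset.sum_add_distrib]
  exact hs

lemma Tp_closed (n : ℕ) :
    Tp n = 2 * (-1) ^ n * 16 ^ n * ((n.factorial : ℝ)) ^ 2 / ((2 * n + 1).factorial : ℝ) := by
  induction n with
  | zero =>
    unfold Tp
    norm_num [Finset.sum_range_succ, tt]
  | succ n ih =>
    have h3 : (2 * (n : ℝ) + 3) ≠ 0 := by positivity
    have hstep := step n
    have hT : Tp (n + 1) = -(8 * ((n : ℝ) + 1) * Tp n) / (2 * (n : ℝ) + 3) := by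
      field_simp
      linarith
    have hf : ((2 * (n + 1) + 1).factorial : ℝ)
        = (2 * (n : ℝ) + 3) * ((2 * (n : ℝ) + 2) * ((2 * n + 1).factorial : ℝ)) := by
      have h1 : 2 * (n + 1) + 1 = (2 * n + 2) + 1 := by ring
      have h2 : 2 * n + 2 = (2 * n + 1) + 1 := by ring
      rw [h1, Nat.factorial_succ, h2, Nat.factorial_succ, ← h2]
      push_cast
      ring
    have hfn : ((n + 1).factorial : ℝ) = ((n : ℝ) + 1) * (n.factorial : ℝ) := by
      rw [Nat.factorial_succ]; push_cast; ring
    rw [hT, ih, hf, hfn]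
    have hfac : ((2 * n + 1).factorial : ℝ) ≠ 0 := by
      exact_mod_cast Nat.factorial_ne_zero _
    field_simp
    ring

lemma tt_reflect (n j : ℕ) (h : j ≤ 2 * n + 1) : tt n (2 * n + 1 - j) = tt n j := by
  unfold tt
  rw [Nat.choose_symm h]
  have hc : ((2 * n + 1 - j : ℕ) : ℝ) = 2 * (n : ℝ) + 1 - j := by
    rw [Nat.cast_sub h]; push_cast; ring
  rw [hc]
  have hodd : (-1 : ℝ) ^ (2 * n + 1) = -1 := Odd.neg_one_pow ⟨n, by ring⟩
  have hmul : (-1 : ℝ) ^ (2 * n + 1 - j) * (-1) ^ j = -1 := by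
    rw [← pow_add, Nat.sub_add_cancel h, hodd]
  have hsq : ((-1 : ℝ) ^ j) * ((-1) ^ j) = 1 := by
    rw [← pow_add, ← two_mul, pow_mul]; norm_num
  have hsgn : (-1 : ℝ) ^ (2 * n + 1 - j) = -(-1) ^ j := by
    calc (-1 : ℝ) ^ (2 * n + 1 - j) = (-1 : ℝ) ^ (2 * n + 1 - j) * (((-1) ^ j) * ((-1) ^ j)) := by
          rw [hsq]; ring
      _ = ((-1 : ℝ) ^ (2 * n + 1 - j) * (-1) ^ j) * (-1) ^ j := by ring
      _ = -(-1) ^ j := by rw [hmul]; ring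
  rw [hsgn]
  rw [div_eq_div_iff (by intro hx; apply odd_ne n j; · push_cast; linarith) (odd_ne n j)]
  push_cast
  ring

lemma half_sum (n : ℕ) : ∑ j ∈ Finset.range (n + 1), tt n j = Tp n / 2 := by
  have hsplit : Tp n = (∑ j ∈ Finset.range (n + 1), tt n j)
      + ∑ i ∈ Finset.range (n + 1), tt n (n + 1 + i) := by
    unfold Tp
    rw [show 2 * n + 2 = (n + 1) + (n + 1) by ring, Finset.sum_range_add]
  have hrefl : ∑ i ∈ Finset.range (n + 1), tt n (n + 1 + i)
      = ∑ j ∈ Finset.range (n + 1), tt n j := by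
    rw [← Finset.sum_range_reflect (fun i => tt n (n + 1 + i)) (n + 1)]
    refine Finset.sum_congr rfl fun i hi => ?_
    have hi' : i ≤ n := by simpa [Nat.lt_succ_iff] using hi
    rw [show n + 1 + (n + 1 - 1 - i) = 2 * n + 1 - i by omega]
    exact tt_reflect n i (by omega)
  rw [hrefl] at hsplit
  linarith

open Polynomial


noncomputable def binp (r : ℕ) : ℝ[X] :=
  Polynomial.C ((r.factorial : ℝ)⁻¹) * ∏ s ∈ Finset.range r, (Polynomial.X - Polynomial.C (s : ℝ))

lemma prod_desc (M r : ℕ) (h : r ≤ M) :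
    ∏ s ∈ Finset.range r, ((M : ℝ) - s) = (M.descFactorial r : ℝ) := by
  induction r with
  | zero => simp
  | succ r ih =>
    rw [Finset.prod_range_succ, ih (by omega), Nat.descFactorial_succ,
      Nat.cast_mul, Nat.cast_sub (by omega)]
    ring

lemma eval_binp (M r : ℕ) (h : r ≤ M) : eval (M : ℝ) (binp r) = (M.choose r : ℝ) := by
  unfold binp
  rw [eval_mul, eval_C, eval_prod]
  simp only [eval_sub, eval_X, eval_C]
  rw [prod_desc M r h, Nat.descFactorial_eq_factorial_mul_choose]
  have hfr : (r.factorial : ℝ) ≠ 0 := by exact_mod_cast Nat.factorial_ne_zero r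
  push_cast
  field_simp

lemma Hnum_sub (M r : ℕ) (h : r ≤ M) :
    ∑ s ∈ Finset.range r, ((M : ℝ) - s)⁻¹ = Hnum M - Hnum (M - r) := by
  induction r with
  | zero => simp
  | succ r ih =>
    rw [Finset.sum_range_succ, ih (by omega)]
    have hm : M - r = (M - (r + 1)) + 1 := by omega
    have hc : ((M - (r + 1) : ℕ) : ℝ) + 1 = (M : ℝ) - r := by
      rw [Nat.cast_sub (by omega)]; push_cast; ring
    have hH : Hnum (M - r) = Hnum (M - (r + 1)) + ((M : ℝ) - r)⁻¹ := by
      rw [hm]; unfold Hnum; rw [Finset.sum_range_succ, hc, one_div]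
    rw [hH]
    ring

lemma eval_deriv_prod_at (M r : ℕ) (h : r ≤ M) :
    eval (M : ℝ) (derivative (∏ s ∈ Finset.range r, (X - C (s : ℝ))))
      = (M.descFactorial r : ℝ) * ∑ s ∈ Finset.range r, ((M : ℝ) - s)⁻¹ := by
  have hdp : derivative (∏ s ∈ Finset.range r, (X - C ((s : ℕ) : ℝ)))
      = ∑ s ∈ Finset.range r,
          (∏ s' ∈ (Finset.range r).erase s, (X - C ((s' : ℕ) : ℝ))) * derivative (X - C ((s : ℕ) : ℝ)) := by
    rw [Finset.prod_eq_multiset_prod, derivative_prod, Finset.sum_eq_multiset_sum]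
    congr 1
  rw [hdp, eval_finset_sum, Finset.mul_sum]
  refine Finset.sum_congr rfl fun s hs => ?_
  have hsr : s < r := Finset.mem_range.1 hs
  have hne : (M : ℝ) - s ≠ 0 := by
    have : (s : ℝ) < M := by exact_mod_cast lt_of_lt_of_le hsr h
    intro hx; linarith
  have hd : derivative (X - C ((s : ℕ) : ℝ)) = 1 := by
    rw [derivative_sub, derivative_X, derivative_C, sub_zero]
  rw [eval_mul, hd, eval_one, mul_one, eval_prod]
  simp only [eval_sub, eval_X, eval_C]
  have hpr := Finset.prod_erase_mul (Finset.range r) (fun s' => (M : ℝ) - (s' : ℕ)) hs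
  rw [prod_desc M r h] at hpr
  beta_reduce at hpr
  field_simp
  linarith [hpr]

lemma eval_deriv_binp (M r : ℕ) (h : r ≤ M) :
    eval (M : ℝ) (derivative (binp r)) = (M.choose r : ℝ) * (Hnum M - Hnum (M - r)) := by
  unfold binp
  rw [derivative_C_mul, eval_mul, eval_C, eval_deriv_prod_at M r h, Hnum_sub M r h,
    Nat.descFactorial_eq_factorial_mul_choose]
  have hfr : (r.factorial : ℝ) ≠ 0 := by exact_mod_cast Nat.factorial_ne_zero r
  push_cast
  field_simp

lemma eval_deriv_binp_zero (r : ℕ) (hr : 1 ≤ r) :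
    eval 0 (derivative (binp r)) = (-1) ^ (r - 1) / r := by
  obtain ⟨u, rfl⟩ : ∃ u, r = u + 1 := ⟨r - 1, by omega⟩
  unfold binp
  rw [derivative_C_mul, eval_mul, eval_C]
  have hq : (∏ s ∈ Finset.range (u + 1), (X - C ((s : ℕ) : ℝ)))
      = (∏ i ∈ Finset.range u, (X - C (((i + 1 : ℕ)) : ℝ))) * X := by
    rw [Finset.prod_range_succ']
    norm_num
  rw [hq, derivative_mul, derivative_X, mul_one]
  rw [eval_add, eval_mul, eval_X, mul_zero, zero_add, eval_prod]
  simp only [eval_sub, eval_X, eval_C, zero_sub]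
  have hprod : (∏ i ∈ Finset.range u, -(((i + 1 : ℕ) : ℝ)))
      = (-1) ^ u * (u.factorial : ℝ) := by
    have e1 : (∏ i ∈ Finset.range u, -(((i + 1 : ℕ) : ℝ)))
        = ∏ i ∈ Finset.range u, ((-1) * ((i + 1 : ℕ) : ℝ)) := by
      refine Finset.prod_congr rfl fun i _ => by ring
    rw [e1, Finset.prod_mul_distrib, Finset.prod_const, Finset.card_range]
    congr 1
    rw [← Nat.cast_prod]
    exact_mod_cast congrArg (fun x : ℕ => (x : ℝ)) (Finset.prod_range_add_one_eq_factorial u)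
  rw [hprod, Nat.factorial_succ, Nat.add_sub_cancel]
  have hfu : (u.factorial : ℝ) ≠ 0 := by exact_mod_cast Nat.factorial_ne_zero u
  have hu1 : ((u : ℝ) + 1) ≠ 0 := by positivity
  push_cast
  field_simp

lemma expand1 (m : ℕ) :
    (1 - X : ℤ[X]) ^ m = ∑ k ∈ Finset.range (m + 1), C ((-1 : ℤ) ^ k * (m.choose k : ℤ)) * X ^ k := by
  have h : (1 - X : ℤ[X]) = (-X) + 1 := by ring
  rw [h, add_pow]
  refine Finset.sum_congr rfl fun k hk => ?_
  have hC : (C ((-1 : ℤ) ^ k * (m.choose k : ℤ)) : ℤ[X])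
      = (-1) ^ k * ((m.choose k : ℕ) : ℤ[X]) := by
    rw [C_mul, C_pow, map_neg, C_1, C_eq_natCast]
  rw [hC, neg_pow]
  push_cast
  ring

lemma expand2 (m : ℕ) :
    (1 - X ^ 2 : ℤ[X]) ^ m
      = ∑ k ∈ Finset.range (m + 1), C ((-1 : ℤ) ^ k * (m.choose k : ℤ)) * X ^ (2 * k) := by
  have h : (1 - X ^ 2 : ℤ[X]) = (-(X ^ 2)) + 1 := by ring
  rw [h, add_pow]
  refine Finset.sum_congr rfl fun k hk => ?_
  have hC : (C ((-1 : ℤ) ^ k * (m.choose k : ℤ)) : ℤ[X])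
      = (-1) ^ k * ((m.choose k : ℕ) : ℤ[X]) := by
    rw [C_mul, C_pow, map_neg, C_1, C_eq_natCast]
  rw [hC, neg_pow, ← pow_mul]
  push_cast
  ring

lemma coeff_conv (L N m : ℕ) (a : ℕ → ℤ) (e : ℕ → ℕ) :
    ((∑ k ∈ Finset.range L, C (a k) * X ^ (e k)) * (X + 1) ^ N).coeff m
      = ∑ k ∈ Finset.range L, a k * (if e k ≤ m then (N.choose (m - e k) : ℤ) else 0) := by
  rw [Finset.sum_mul, finset_sum_coeff]
  refine Finset.sum_congr rfl fun k hk => ?_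
  rw [mul_assoc, mul_comm (X ^ (e k)), ← mul_assoc, coeff_mul_X_pow']
  split_ifs with h
  · rw [coeff_C_mul, coeff_X_add_one_pow]
  · rw [mul_zero]

lemma int_id (n d : ℕ) :
    ∑ k ∈ Finset.range (2 * n + 2),
        (-1 : ℤ) ^ k * ((2 * n + 1).choose k : ℤ) * ((2 * (2 * n + 1) + d).choose (2 * n + 1 - k) : ℤ)
      = ∑ j ∈ Finset.range (n + 1),
        (-1 : ℤ) ^ j * ((2 * n + 1).choose j : ℤ) * (((2 * n + 1) + d).choose (2 * n + 1 - 2 * j) : ℤ) := by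
  have hpoly : ((1 - X : ℤ[X]) ^ (2 * n + 1) * (X + 1) ^ (2 * (2 * n + 1) + d))
      = (1 - X ^ 2) ^ (2 * n + 1) * (X + 1) ^ ((2 * n + 1) + d) := by
    have h2 : (1 - X ^ 2 : ℤ[X]) = (1 - X) * (X + 1) := by ring
    rw [h2, mul_pow, show 2 * (2 * n + 1) + d = (2 * n + 1) + ((2 * n + 1) + d) by ring, pow_add]
    ring
  have hc := congrArg (fun p : ℤ[X] => p.coeff (2 * n + 1)) hpoly
  rw [expand1, expand2, coeff_conv, coeff_conv] at hc
  rw [show 2 * n + 1 + 1 = 2 * n + 2 by omega] at hc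
  -- LHS: all k in range (2n+2) satisfy k ≤ 2n+1
  have hL : ∑ k ∈ Finset.range (2 * n + 2),
      (-1 : ℤ) ^ k * ((2 * n + 1).choose k : ℤ)
        * (if k ≤ 2 * n + 1 then ((2 * (2 * n + 1) + d).choose (2 * n + 1 - k) : ℤ) else 0)
      = ∑ k ∈ Finset.range (2 * n + 2),
        (-1 : ℤ) ^ k * ((2 * n + 1).choose k : ℤ) * ((2 * (2 * n + 1) + d).choose (2 * n + 1 - k) : ℤ) := by
    refine Finset.sum_congr rfl fun k hk => ?_
    rw [if_pos (by simpa [Nat.lt_succ_iff] using Finset.mem_range.1 hk)]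
  have hR : ∑ k ∈ Finset.range (2 * n + 2),
      (-1 : ℤ) ^ k * ((2 * n + 1).choose k : ℤ)
        * (if 2 * k ≤ 2 * n + 1 then (((2 * n + 1) + d).choose (2 * n + 1 - 2 * k) : ℤ) else 0)
      = ∑ j ∈ Finset.range (n + 1),
        (-1 : ℤ) ^ j * ((2 * n + 1).choose j : ℤ) * (((2 * n + 1) + d).choose (2 * n + 1 - 2 * j) : ℤ) := by
    rw [← Finset.sum_subset (Finset.range_subset_range.2 (by omega) :
        Finset.range (n + 1) ⊆ Finset.range (2 * n + 2))]
    · refine Finset.sum_congr rfl fun j hj => ?_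
      rw [if_pos (by have := Finset.mem_range.1 hj; omega)]
    · intro k hk hk'
      have h1 : n + 1 ≤ k := by simpa using hk'
      rw [if_neg (by omega), mul_zero]
  rw [← hL, ← hR]
  exact hc

noncomputable def P1 (n : ℕ) : ℝ[X] :=
  ∑ k ∈ Finset.range (2 * n + 2),
    C ((-1 : ℝ) ^ k * ((2 * n + 1).choose k : ℝ)) * binp (2 * n + 1 - k)

noncomputable def P2 (n : ℕ) : ℝ[X] :=
  ∑ j ∈ Finset.range (n + 1),
    C ((-1 : ℝ) ^ j * ((2 * n + 1).choose j : ℝ)) *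
      (binp (2 * n + 1 - 2 * j)).comp (X - C (((2 * n + 1 : ℕ)) : ℝ))

lemma P1_eq_P2 (n : ℕ) : P1 n = P2 n := by
  apply Polynomial.eq_of_infinite_eval_eq
  have hinj : Function.Injective (fun d : ℕ => ((2 * (2 * n + 1) + d : ℕ) : ℝ)) := by
    intro a b hab
    simp only [Nat.cast_inj] at hab
    omega
  refine (Set.infinite_range_of_injective hinj).mono ?_
  rintro x ⟨d, rfl⟩
  show eval _ (P1 n) = eval _ (P2 n)
  unfold P1 P2
  rw [eval_finset_sum, eval_finset_sum]
  have hL : ∀ k ∈ Finset.range (2 * n + 2),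
      eval (((2 * (2 * n + 1) + d : ℕ)) : ℝ)
        (C ((-1 : ℝ) ^ k * ((2 * n + 1).choose k : ℝ)) * binp (2 * n + 1 - k))
      = (-1 : ℝ) ^ k * ((2 * n + 1).choose k : ℝ)
          * ((2 * (2 * n + 1) + d).choose (2 * n + 1 - k) : ℝ) := by
    intro k _
    rw [eval_mul, eval_C, eval_binp _ _ (by omega)]
  have hR : ∀ j ∈ Finset.range (n + 1),
      eval (((2 * (2 * n + 1) + d : ℕ)) : ℝ)
        (C ((-1 : ℝ) ^ j * ((2 * n + 1).choose j : ℝ)) *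
          (binp (2 * n + 1 - 2 * j)).comp (X - C (((2 * n + 1 : ℕ)) : ℝ)))
      = (-1 : ℝ) ^ j * ((2 * n + 1).choose j : ℝ)
          * (((2 * n + 1) + d).choose (2 * n + 1 - 2 * j) : ℝ) := by
    intro j _
    rw [eval_mul, eval_C, eval_comp, eval_sub, eval_X, eval_C]
    have hcast : ((2 * (2 * n + 1) + d : ℕ) : ℝ) - ((2 * n + 1 : ℕ) : ℝ)
        = (((2 * n + 1) + d : ℕ) : ℝ) := by push_cast; ring
    rw [hcast, eval_binp _ _ (by omega)]
  rw [Finset.sum_congr rfl hL, Finset.sum_congr rfl hR]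
  have := int_id n d
  have hcast := congrArg (fun z : ℤ => (z : ℝ)) this
  push_cast at hcast
  convert hcast using 1

lemma Zsum (n : ℕ) :
    ∑ k ∈ Finset.range (2 * n + 2), (-1 : ℝ) ^ k * (((2 * n + 1).choose k : ℝ)) ^ 2 = 0 := by
  have hrefl := Finset.sum_range_reflect
    (fun k => (-1 : ℝ) ^ k * (((2 * n + 1).choose k : ℝ)) ^ 2) (2 * n + 2)
  have hterm : ∀ k ∈ Finset.range (2 * n + 2),
      (-1 : ℝ) ^ (2 * n + 2 - 1 - k) * (((2 * n + 1).choose (2 * n + 2 - 1 - k) : ℝ)) ^ 2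
      = -((-1 : ℝ) ^ k * (((2 * n + 1).choose k : ℝ)) ^ 2) := by
    intro k hk
    have hk' : k ≤ 2 * n + 1 := by have := Finset.mem_range.1 hk; omega
    have h1 : 2 * n + 2 - 1 - k = 2 * n + 1 - k := by omega
    rw [h1, Nat.choose_symm hk']
    have hodd : (-1 : ℝ) ^ (2 * n + 1) = -1 := Odd.neg_one_pow ⟨n, by ring⟩
    have hmul : (-1 : ℝ) ^ (2 * n + 1 - k) * (-1) ^ k = -1 := by
      rw [← pow_add, Nat.sub_add_cancel hk', hodd]
    have hsq : ((-1 : ℝ) ^ k) * ((-1) ^ k) = 1 := by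
      rw [← pow_add, ← two_mul, pow_mul]; norm_num
    have hsgn : (-1 : ℝ) ^ (2 * n + 1 - k) = -(-1) ^ k := by
      calc (-1 : ℝ) ^ (2 * n + 1 - k)
          = (-1 : ℝ) ^ (2 * n + 1 - k) * (((-1) ^ k) * ((-1) ^ k)) := by rw [hsq]; ring
        _ = ((-1 : ℝ) ^ (2 * n + 1 - k) * (-1) ^ k) * (-1) ^ k := by ring
        _ = -(-1) ^ k := by rw [hmul]; ring
    rw [hsgn]; ring
  rw [Finset.sum_congr rfl hterm] at hrefl
  rw [Finset.sum_neg_distrib] at hrefl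
  linarith [hrefl]

lemma derivP1 (n : ℕ) : eval (((2 * n + 1 : ℕ)) : ℝ) (derivative (P1 n))
    = -(∑ k ∈ Finset.range (2 * n + 2), (-1 : ℝ) ^ k * Hnum k * ((2 * n + 1).choose k : ℝ) ^ 2) := by
  unfold P1
  rw [derivative_sum, eval_finset_sum]
  have hterm : ∀ k ∈ Finset.range (2 * n + 2),
      eval (((2 * n + 1 : ℕ)) : ℝ)
        (derivative (C ((-1 : ℝ) ^ k * ((2 * n + 1).choose k : ℝ)) * binp (2 * n + 1 - k)))
      = (-1 : ℝ) ^ k * ((2 * n + 1).choose k : ℝ) ^ 2 * (Hnum (2 * n + 1) - Hnum k) := by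
    intro k hk
    have hk' : k ≤ 2 * n + 1 := by have := Finset.mem_range.1 hk; omega
    rw [derivative_C_mul, eval_mul, eval_C, eval_deriv_binp _ _ (Nat.sub_le _ _),
      Nat.choose_symm hk', show 2 * n + 1 - (2 * n + 1 - k) = k by omega]
    ring
  rw [Finset.sum_congr rfl hterm]
  have hsplit : ∑ k ∈ Finset.range (2 * n + 2),
      (-1 : ℝ) ^ k * ((2 * n + 1).choose k : ℝ) ^ 2 * (Hnum (2 * n + 1) - Hnum k)
      = Hnum (2 * n + 1) * (∑ k ∈ Finset.range (2 * n + 2), (-1 : ℝ) ^ k * ((2 * n + 1).choose k : ℝ) ^ 2)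
        - ∑ k ∈ Finset.range (2 * n + 2), (-1 : ℝ) ^ k * Hnum k * ((2 * n + 1).choose k : ℝ) ^ 2 := by
    rw [Finset.mul_sum, ← Finset.sum_sub_distrib]
    exact Finset.sum_congr rfl fun k _ => by ring
  rw [hsplit, Zsum]
  ring

lemma derivP2 (n : ℕ) : eval (((2 * n + 1 : ℕ)) : ℝ) (derivative (P2 n))
    = ∑ j ∈ Finset.range (n + 1), tt n j := by
  unfold P2
  rw [derivative_sum, eval_finset_sum]
  refine Finset.sum_congr rfl fun j hj => ?_
  have hj' : j ≤ n := by have := Finset.mem_range.1 hj; omega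
  rw [derivative_C_mul, eval_mul, eval_C, derivative_comp]
  have hd1 : derivative (X - C (((2 * n + 1 : ℕ)) : ℝ)) = 1 := by
    rw [derivative_sub, derivative_X, derivative_C, sub_zero]
  rw [eval_mul, hd1, eval_one, one_mul, eval_comp, eval_sub, eval_X, eval_C, sub_self,
    eval_deriv_binp_zero _ (by omega)]
  rw [show 2 * n + 1 - 2 * j - 1 = 2 * (n - j) by omega]
  have hev : (-1 : ℝ) ^ (2 * (n - j)) = 1 := by rw [pow_mul]; norm_num
  have hcast : ((2 * n + 1 - 2 * j : ℕ) : ℝ) = 2 * (n : ℝ) + 1 - 2 * j := by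
    rw [Nat.cast_sub (by omega)]; push_cast; ring
  rw [hev, hcast]
  unfold tt
  ring

/-- For every `n ≥ 0`,
`Σ_{k=0}^{2n+1} (−1)^k H_k binom(2n+1,k)² = (−1)^{n+1} · 2^{4n} · (n!)² / (2n+1)!`. -/
theorem stmt5 (n : ℕ) :
    ∑ k ∈ Finset.range (2 * n + 2), (-1 : ℝ) ^ k * Hnum k * ((2 * n + 1).choose k : ℝ) ^ 2 =
      (-1 : ℝ) ^ (n + 1) * 2 ^ (4 * n) * (n.factorial : ℝ) ^ 2 / ((2 * n + 1).factorial : ℝ) := by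
  have h := congrArg (fun p : ℝ[X] => eval (((2 * n + 1 : ℕ)) : ℝ) (derivative p)) (P1_eq_P2 n)
  rw [derivP1, derivP2, half_sum, Tp_closed] at h
  have h16 : (2 : ℝ) ^ (4 * n) = 16 ^ n := by
    rw [pow_mul]; norm_num
  rw [h16, pow_succ]
  linear_combination -h
end

section
/- Let P_{t,m}(x) = (x+t+1)(x+t+2)⋯(x+t+m) be the shifted rising factorial. Then the polynomial Q_{t,m}(x) = P_{t,m}(x)² − P_{t,m}(−x)² is divisible by x, and Q_{t,m}(x)/x is an even polynomial of degree 2(m−1) whose constant coefficient equals 4·[(t+m)!/t!]²·(H_{t+m} − H_t), where H_j denotes the j-th harmonic number. -/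
/-!
With `f = P²`, `Q(x) = f(x) - f(-x)` has `n`-th coefficient `(1 - (-1)ⁿ) fₙ`. Hence `Q` is odd
with no constant term, so `Q / x` is even; since `f` is monic of even degree `2m`, the `x^{2m}`
terms cancel while the `x^{2m-1}` coefficient is `4 Σⱼ (t + j + 1) ≠ 0`. Finally the constant
coefficient of `Q / x` is `Q₁ = 2 f₁ = 4 P(0) P'(0)`, where `P(0) = (t+m)!/t!` and
`P'(0) / P(0) = Σⱼ 1/(t + j + 1) = H_{t+m} - H_t`.
-/

open Polynomial

/-- The shifted rising factorial `P_{t,m}(x) = (x+t+1)(x+t+2)⋯(x+t+m)`. -/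
noncomputable def Ppoly (t m : ℕ) : Polynomial ℝ :=
  ∏ j ∈ Finset.range m, (X + C ((t : ℝ) + j + 1))

/-- `Q_{t,m}(x) = P_{t,m}(x)² − P_{t,m}(−x)²`. -/
noncomputable def Qpoly (t m : ℕ) : Polynomial ℝ :=
  (Ppoly t m) ^ 2 - ((Ppoly t m).comp (-X)) ^ 2

open Finset

namespace Polynomial

section CommRing

variable {R : Type*} [CommRing R]

theorem coeff_comp_neg_X (p : R[X]) (n : ℕ) : (p.comp (-X)).coeff n = (-1) ^ n * p.coeff n := by
  induction p using Polynomial.induction_on' with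
  | add p q hp hq => rw [add_comp, coeff_add, coeff_add, hp, hq, mul_add]
  | monomial k a =>
    rw [monomial_comp, ← neg_one_mul (X : R[X]), ← C_1, ← C_neg, mul_pow, ← C_pow, ← mul_assoc,
      ← C_mul, coeff_C_mul_X_pow, coeff_monomial]
    by_cases h : n = k
    · simp [h, mul_comm]
    · simp [h, Ne.symm h]

theorem coeff_sub_comp_neg_X (p : R[X]) (n : ℕ) :
    (p - p.comp (-X)).coeff n = (1 - (-1) ^ n) * p.coeff n := by
  rw [coeff_sub, coeff_comp_neg_X, sub_mul, one_mul]

theorem sub_comp_neg_X_comp_neg_X (p : R[X]) :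
    (p - p.comp (-X)).comp (-X) = -(p - p.comp (-X)) := by
  rw [sub_comp, comp_neg_X_comp_neg_X, neg_sub]

theorem comp_neg_X_eq_self_of_X_mul {r : R[X]} (h : (X * r).comp (-X) = -(X * r)) :
    r.comp (-X) = r := by
  rw [mul_comp, X_comp, neg_mul, neg_inj] at h
  exact isRegular_X.left h

theorem natDegree_sub_comp_neg_X {p : R[X]} (hp : Even p.natDegree) (h : 2 * p.nextCoeff ≠ 0) :
    (p - p.comp (-X)).natDegree = p.natDegree - 1 := by
  have hpos : 0 < p.natDegree := by
    by_contra! h0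
    exact h (by rw [nextCoeff, if_pos (Nat.le_zero.1 h0), mul_zero])
  refine natDegree_eq_of_le_of_coeff_ne_zero ?_ ?_
  · rw [natDegree_le_iff_coeff_eq_zero]
    intro N hN
    rw [coeff_sub_comp_neg_X]
    rcases Nat.lt_or_ge p.natDegree N with hlt | hle
    · rw [coeff_eq_zero_of_natDegree_lt hlt, mul_zero]
    · rw [show N = p.natDegree by omega, hp.neg_one_pow, sub_self, zero_mul]
  · rw [coeff_sub_comp_neg_X, (Nat.Even.sub_odd hpos hp odd_one).neg_one_pow, sub_neg_eq_add,
      one_add_one_eq_two, ← nextCoeff_of_natDegree_pos hpos]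
    exact h

theorem coeff_one_sq (p : R[X]) : (p ^ 2).coeff 1 = 2 * p.coeff 0 * p.coeff 1 := by
  rw [sq, coeff_mul, Nat.sum_antidiagonal_eq_sum_range_succ_mk]
  simp only [sum_range_succ, range_one, sum_singleton, tsub_zero, tsub_self]
  ring

variable {ι : Type*} (s : Finset ι) (c : ι → R)

theorem monic_prod_X_add_C : (∏ i ∈ s, (X + C (c i))).Monic :=
  monic_prod_of_monic _ _ fun i _ => monic_X_add_C (c i)

theorem natDegree_prod_X_add_C [Nontrivial R] : (∏ i ∈ s, (X + C (c i))).natDegree = #s := by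
  simp [natDegree_prod_of_monic _ _ fun i _ => monic_X_add_C (c i)]

theorem nextCoeff_prod_X_add_C : (∏ i ∈ s, (X + C (c i))).nextCoeff = ∑ i ∈ s, c i := by
  simp [Monic.nextCoeff_prod _ _ fun i _ => monic_X_add_C (c i), nextCoeff_X_add_C]

theorem coeff_zero_prod_X_add_C : (∏ i ∈ s, (X + C (c i))).coeff 0 = ∏ i ∈ s, c i := by
  simp [coeff_zero_eq_eval_zero, eval_prod]

end CommRing

theorem coeff_one_prod_X_add_C {K ι : Type*} [Field K] (s : Finset ι) (c : ι → K)
    (hc : ∀ i ∈ s, c i ≠ 0) :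
    (∏ i ∈ s, (X + C (c i))).coeff 1 = (∏ i ∈ s, c i) * ∑ i ∈ s, (c i)⁻¹ := by
  induction s using Finset.cons_induction with
  | empty => simp [coeff_one]
  | cons a s ha ih =>
    have hs : ∀ i ∈ s, c i ≠ 0 := fun i hi => hc i (mem_cons_of_mem hi)
    have hca : c a ≠ 0 := hc a (mem_cons_self a s)
    rw [prod_cons, prod_cons, sum_cons, add_mul, coeff_add, coeff_C_mul,
      show (1 : ℕ) = 0 + 1 from rfl, coeff_X_mul, coeff_zero_prod_X_add_C, zero_add, ih hs]
    field_simp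

end Polynomial

theorem prod_range_add_one_eq_factorial_div (t m : ℕ) :
    ∏ j ∈ range m, ((t : ℝ) + j + 1) = ((t + m).factorial : ℝ) / t.factorial := by
  rw [eq_div_iff (by positivity), ← Nat.factorial_mul_ascFactorial, Nat.ascFactorial_eq_prod_range]
  push_cast
  ring_nf

theorem Hnum_add_sub (t m : ℕ) : Hnum (t + m) - Hnum t = ∑ j ∈ range m, ((t : ℝ) + j + 1)⁻¹ := by
  rw [Hnum, Hnum, sum_range_add, add_sub_cancel_left]
  push_cast
  ring_nf

theorem monic_Ppoly (t m : ℕ) : (Ppoly t m).Monic := monic_prod_X_add_C _ _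

theorem natDegree_Ppoly (t m : ℕ) : (Ppoly t m).natDegree = m := by
  rw [Ppoly, natDegree_prod_X_add_C, card_range]

theorem nextCoeff_Ppoly_pos (t : ℕ) {m : ℕ} (hm : 1 ≤ m) : 0 < (Ppoly t m).nextCoeff := by
  rw [Ppoly, nextCoeff_prod_X_add_C]
  exact sum_pos (fun j _ => by positivity) (nonempty_range_iff.2 (by omega))

theorem coeff_zero_Ppoly (t m : ℕ) :
    (Ppoly t m).coeff 0 = ((t + m).factorial : ℝ) / t.factorial := by
  rw [Ppoly, coeff_zero_prod_X_add_C, prod_range_add_one_eq_factorial_div]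

theorem coeff_one_Ppoly (t m : ℕ) :
    (Ppoly t m).coeff 1 = ((t + m).factorial : ℝ) / t.factorial * (Hnum (t + m) - Hnum t) := by
  rw [Ppoly, coeff_one_prod_X_add_C _ _ fun j _ => by positivity, prod_range_add_one_eq_factorial_div,
    Hnum_add_sub]

theorem Qpoly_eq (t m : ℕ) : Qpoly t m = Ppoly t m ^ 2 - (Ppoly t m ^ 2).comp (-X) := by
  rw [Qpoly, pow_comp]

theorem natDegree_Qpoly (t : ℕ) {m : ℕ} (hm : 1 ≤ m) : (Qpoly t m).natDegree = 2 * m - 1 := by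
  have hsq : (Ppoly t m ^ 2).natDegree = 2 * m := by
    rw [(monic_Ppoly t m).natDegree_pow, natDegree_Ppoly, mul_comm]
  rw [Qpoly_eq, natDegree_sub_comp_neg_X, hsq]
  · exact hsq ▸ even_two_mul m
  · rw [(monic_Ppoly t m).nextCoeff_pow, nsmul_eq_mul]
    have := nextCoeff_Ppoly_pos t hm
    positivity

/-- `Q_{t,m}` is divisible by `x`, and `Q_{t,m}(x)/x` is an even
polynomial of degree `2(m−1)` whose constant coefficient equals
`4·[(t+m)!/t!]²·(H_{t+m} − H_t)`. -/
theorem stmt7 (t m : ℕ) (hm : 1 ≤ m) :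
    X ∣ Qpoly t m ∧
    ((Qpoly t m) /ₘ X).comp (-X) = (Qpoly t m) /ₘ X ∧
    ((Qpoly t m) /ₘ X).natDegree = 2 * (m - 1) ∧
    ((Qpoly t m) /ₘ X).coeff 0 =
      4 * (((t + m).factorial : ℝ) / (t.factorial : ℝ)) ^ 2 * (Hnum (t + m) - Hnum t) := by
  obtain ⟨r, hr⟩ : X ∣ Qpoly t m := by
    rw [X_dvd_iff, Qpoly_eq, coeff_sub_comp_neg_X, pow_zero, sub_self, zero_mul]
  have hdiv : Qpoly t m /ₘ X = r := by rw [hr, mul_divByMonic_cancel_left _ monic_X]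
  refine ⟨⟨r, hr⟩, ?_, ?_, ?_⟩
  · rw [hdiv]
    exact comp_neg_X_eq_self_of_X_mul (by rw [← hr, Qpoly_eq, sub_comp_neg_X_comp_neg_X])
  · rw [natDegree_divByMonic _ monic_X, natDegree_Qpoly t hm, natDegree_X]
    omega
  · rw [hdiv, ← coeff_X_mul, ← hr, Qpoly_eq, coeff_sub_comp_neg_X, coeff_one_sq,
      coeff_zero_Ppoly, coeff_one_Ppoly]
    ring
end

section
/- For natural numbers n and 0 ≤ j ≤ n, the 2j-th derivative of C_{2n,n}(θ) = Σ_k binom(2n, n+k)² cos(kθ) (note binom(2n,n+k)binom(2n,n−k) = binom(2n,n+k)²) satisfies d^{2j}C_{2n,n}/dθ^{2j} = Σ_{k=0}^{j} (−1)^k ((2n)!/(2n−j+k)!)² Z_{j−k,k}(n) C_{2n−j+k, n−j+k}(θ), where Z_{p,q} are defined by Z_{p,q}(n) = Σ_{0 ≤ d₁ ≤ ⋯ ≤ d_q ≤ p} ∏_i (n−d_i)² (Z_{p,0}=1, Z_{p,q}=0 for p<0 or q<0). -/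
open scoped Classical

/-- The function `C_{m,n}(θ) = Σ_k binom(m,n+k) binom(m,n−k) cos(kθ)`,
the sum taken over all integers `k` (only `|k| ≤ m` contributes). -/
noncomputable def Cfun (m n : ℕ) : ℝ → ℝ := fun θ =>
  ∑ k ∈ Finset.Icc (-(m : ℤ)) (m : ℤ),
    ((ch m ((n : ℤ) + k) * ch m ((n : ℤ) - k) : ℕ) : ℝ) * Real.cos (k * θ)

/-- `Z_{p,q}(x) = Σ_{0 ≤ d₁ ≤ ⋯ ≤ d_q ≤ p} (x−d₁)²⋯(x−d_q)²`, over weakly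
increasing `q`-tuples in `[0,p]`; `Z_{p,0} = 1`. -/
noncomputable def Zfun (p q : ℕ) (x : ℝ) : ℝ :=
  ∑ d ∈ Finset.univ.filter (fun d : Fin q → Fin (p + 1) => Monotone d),
    ∏ i, (x - ((d i : ℕ) : ℝ)) ^ 2

/-! Differentiating a cosine sum twice multiplies its `k`-th coefficient by `-k²`, and the identity
`(m+1)² binom(m,n+k) binom(m,n-k) = ((n+1)² - k²) binom(m+1,n+1+k) binom(m+1,n+1-k)`
(two instances of `(m+1) binom(m,i-1) = i binom(m+1,i)`) turns this into
`C''_{m+1,n+1} = (m+1)² C_{m,n} - (n+1)² C_{m+1,n+1}`.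
Iterating, `C_{m,n}^{(2j)}` is a combination of the `C_{m-p,n-p}` with `p + q = j`, where `q` counts
the uses of the second term. The coefficients then satisfy a Pascal-type recursion along the
antidiagonal `p + q = j`, which is the recursion `Z_{p+1,q+1} = Z_{p,q+1} + (n-p-1)² Z_{p+1,q}`
obtained by splitting the sum `Z_{p+1,q+1}` according to whether its largest index is `p + 1`. -/

lemma ch_eq_zero_of_neg (m : ℕ) {j : ℤ} (h : j < 0) : ch m j = 0 := by
  simp [ch, not_le.mpr h]

lemma ch_eq_zero_of_lt (m : ℕ) {j : ℤ} (h : (m : ℤ) < j) : ch m j = 0 := by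
  unfold ch
  split_ifs
  · exact Nat.choose_eq_zero_of_lt (by omega)
  · rfl

lemma ch_mul_ch_eq_zero_of_lt_abs {m : ℕ} (n : ℕ) {k : ℤ} (h : (m : ℤ) < |k|) :
    ch m (n + k) * ch m (n - k) = 0 := by
  rcases lt_abs.mp h with h | h
  · rw [ch_eq_zero_of_lt m (by omega : (m : ℤ) < n + k), zero_mul]
  · rw [ch_eq_zero_of_lt m (by omega : (m : ℤ) < n - k), mul_zero]

lemma add_one_mul_ch_sub_one (m : ℕ) (j : ℤ) :
    ((m : ℝ) + 1) * ch m (j - 1) = ch (m + 1) j * j := by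
  rcases le_or_gt j 0 with h | h
  · rcases h.lt_or_eq with h | rfl
    · simp [ch_eq_zero_of_neg m (by omega : j - 1 < 0), ch_eq_zero_of_neg (m + 1) h]
    · simp [ch_eq_zero_of_neg m (by norm_num : (-1 : ℤ) < 0)]
  · obtain ⟨t, rfl⟩ : ∃ t : ℕ, j = t + 1 := ⟨(j - 1).toNat, by omega⟩
    have ht : ((t : ℤ) + 1).toNat = t + 1 := by omega
    simp only [ch, add_sub_cancel_right, Nat.cast_nonneg, if_true, Int.toNat_natCast,
      if_pos (by omega : (0 : ℤ) ≤ t + 1), ht]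
    exact_mod_cast Nat.add_one_mul_choose_eq m t

lemma add_one_sq_mul_ch_mul_ch (m n : ℕ) (k : ℤ) :
    ((m : ℝ) + 1) ^ 2 * (ch m (n + k) * ch m (n - k) : ℕ)
      = (((n : ℝ) + 1) ^ 2 - k ^ 2)
        * (ch (m + 1) ((n + 1 : ℕ) + k) * ch (m + 1) ((n + 1 : ℕ) - k) : ℕ) := by
  have e₁ := add_one_mul_ch_sub_one m (n + 1 + k)
  have e₂ := add_one_mul_ch_sub_one m (n + 1 - k)
  rw [show (n : ℤ) + 1 + k - 1 = n + k by ring] at e₁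
  rw [show (n : ℤ) + 1 - k - 1 = n - k by ring] at e₂
  push_cast at e₁ e₂ ⊢
  linear_combination ((m + 1) * (ch m (n - k) : ℝ)) * e₁
    + ((ch (m + 1) (n + 1 + k) : ℝ) * (n + 1 + k)) * e₂

lemma Cfun_eq_sum_Icc {m N : ℕ} (n : ℕ) (h : m ≤ N) (θ : ℝ) :
    Cfun m n θ = ∑ k ∈ Finset.Icc (-(N : ℤ)) N,
      ((ch m (n + k) * ch m (n - k) : ℕ) : ℝ) * Real.cos (k * θ) := by
  refine Finset.sum_subset (Finset.Icc_subset_Icc (by omega) (by omega)) fun k _ hk => ?_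
  rw [ch_mul_ch_eq_zero_of_lt_abs n (lt_abs.mpr (by simp only [Finset.mem_Icc] at hk; omega))]
  simp

lemma contDiff_Cfun {k : WithTop ℕ∞} (m n : ℕ) : ContDiff ℝ k (Cfun m n) := by
  unfold Cfun
  fun_prop

lemma iteratedDeriv_two_cos_mul (k θ : ℝ) :
    iteratedDeriv 2 (fun θ => Real.cos (k * θ)) θ = -k ^ 2 * Real.cos (k * θ) := by
  rw [iteratedDeriv_comp_const_mul Real.contDiff_cos]
  simp [iteratedDeriv_succ]

lemma iteratedDeriv_two_Cfun (m n : ℕ) (θ : ℝ) :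
    iteratedDeriv 2 (Cfun (m + 1) (n + 1)) θ
      = ((m + 1 : ℕ) : ℝ) ^ 2 * Cfun m n θ
        - ((n + 1 : ℕ) : ℝ) ^ 2 * Cfun (m + 1) (n + 1) θ := by
  rw [Cfun_eq_sum_Icc n (Nat.le_succ m) θ]
  unfold Cfun
  rw [iteratedDeriv_fun_sum fun k _ => by fun_prop, Finset.mul_sum,
    Finset.mul_sum, ← Finset.sum_sub_distrib]
  refine Finset.sum_congr rfl fun k _ => ?_
  rw [iteratedDeriv_const_mul_field, iteratedDeriv_two_cos_mul]
  have key := add_one_sq_mul_ch_mul_ch m n k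
  push_cast at key ⊢
  linear_combination (-Real.cos (k * θ)) * key

lemma Zfun_zero_right (p : ℕ) (x : ℝ) : Zfun p 0 x = 1 := by
  simp [Zfun, Subsingleton.monotone]

lemma Zfun_zero_left (q : ℕ) (x : ℝ) : Zfun 0 q x = (x ^ 2) ^ q := by
  simp [Zfun, Fin.eq_zero, Finset.filter_singleton, monotone_const]

section MonotoneSplit

open Finset

variable {p q : ℕ}

lemma sum_monotone_last_ne_last (x : ℝ) :
    ∑ d ∈ (univ.filter fun d : Fin (q + 1) → Fin (p + 2) => Monotone d).filter
        (fun d => ¬ d (Fin.last q) = Fin.last (p + 1)),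
      ∏ i, (x - ((d i : ℕ) : ℝ)) ^ 2 = Zfun p (q + 1) x := by
  refine sum_bij'
    (fun d hd i => (d i).castLT (by
      simp only [mem_filter, mem_univ, true_and] at hd
      exact (hd.1 (Fin.le_last i)).trans_lt (Fin.lt_last_iff_ne_last.mpr hd.2)))
    (fun e _ i => (e i).castSucc) ?_ ?_ (fun _ _ => rfl) (fun _ _ => rfl) (fun _ _ => rfl)
  · intro d hd
    simp only [mem_filter, mem_univ, true_and] at hd ⊢
    exact fun a b hab => hd.1 hab
  · intro e he
    simp only [mem_filter, mem_univ, true_and] at he ⊢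
    exact ⟨fun a b hab => Fin.castSucc_le_castSucc_iff.mpr (he hab),
      (Fin.castSucc_lt_last _).ne⟩

lemma sum_monotone_last_eq_last (x : ℝ) :
    ∑ d ∈ (univ.filter fun d : Fin (q + 1) → Fin (p + 2) => Monotone d).filter
        (fun d => d (Fin.last q) = Fin.last (p + 1)),
      ∏ i, (x - ((d i : ℕ) : ℝ)) ^ 2 = (x - ((p : ℝ) + 1)) ^ 2 * Zfun (p + 1) q x := by
  rw [Zfun, mul_sum]
  refine sum_bij' (fun d _ => Fin.init d) (fun e _ => Fin.snoc e (Fin.last (p + 1))) ?_ ?_ ?_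
    (fun e _ => Fin.init_snoc _ _) ?_
  · intro d hd
    simp only [mem_filter, mem_univ, true_and] at hd ⊢
    exact fun a b hab => hd.1 (Fin.castSucc_le_castSucc_iff.mpr hab)
  · intro e he
    simp only [mem_filter, mem_univ, true_and, Fin.snoc_last, and_true] at he ⊢
    intro a b hab
    induction b using Fin.lastCases with
    | last => rw [Fin.snoc_last]; exact Fin.le_last _
    | cast b =>
      induction a using Fin.lastCases with
      | last => exact absurd hab (Fin.castSucc_lt_last b).not_ge
      | cast a =>
        rw [Fin.snoc_castSucc, Fin.snoc_castSucc]
        exact he (Fin.castSucc_le_castSucc_iff.mp hab)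
  · intro d hd
    simp only [mem_filter, mem_univ, true_and] at hd
    rw [← hd.2, Fin.snoc_init_self]
  · intro d hd
    simp only [mem_filter, mem_univ, true_and] at hd
    rw [Fin.prod_univ_castSucc, hd.2, mul_comm]
    simp [Fin.init]

end MonotoneSplit

lemma Zfun_succ_succ (p q : ℕ) (x : ℝ) :
    Zfun (p + 1) (q + 1) x = Zfun p (q + 1) x + (x - ((p : ℝ) + 1)) ^ 2 * Zfun (p + 1) q x := by
  conv_lhs => rw [Zfun, ← Finset.sum_filter_add_sum_filter_not _
    (fun d => d (Fin.last q) = Fin.last (p + 1))]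
  rw [sum_monotone_last_ne_last, sum_monotone_last_eq_last, add_comm]

open Finset in
lemma Finset.Nat.sum_antidiagonal_succ_ite_mul {R : Type*} [CommRing R] (a b : ℕ → ℕ → R)
    (G : ℕ → R) (j : ℕ) :
    ∑ x ∈ antidiagonal (j + 1),
        ((if x.1 = 0 then 0 else a (x.1 - 1) x.2) - (if x.2 = 0 then 0 else b x.1 (x.2 - 1)))
          * G x.1
      = ∑ x ∈ antidiagonal j, (a x.1 x.2 * G (x.1 + 1) - b x.1 x.2 * G x.1) := by
  simp only [sub_mul, Finset.sum_sub_distrib]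
  rw [Nat.sum_antidiagonal_succ, Nat.sum_antidiagonal_succ']
  simp

lemma div_factorial_succ_mul (a : ℝ) (s : ℕ) :
    a / (s + 1).factorial * ((s : ℝ) + 1) = a / s.factorial := by
  rw [Nat.factorial_succ]
  push_cast
  field_simp

/-- The coefficient of `C_{m-p,n-p}` in the `2(p+q)`-th derivative of `C_{m,n}`. -/
noncomputable def evenDerivCoeff (m n p q : ℕ) : ℝ :=
  (-1) ^ q * ((m.factorial : ℝ) / (m - p).factorial) ^ 2 * Zfun p q n

section evenDerivCoeff

variable {m n p q : ℕ}

lemma evenDerivCoeff_zero_zero (m n : ℕ) : evenDerivCoeff m n 0 0 = 1 := by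
  simp [evenDerivCoeff, Zfun_zero_right, Nat.factorial_ne_zero]

lemma evenDerivCoeff_zero_succ :
    evenDerivCoeff m n 0 (q + 1) = -(n : ℝ) ^ 2 * evenDerivCoeff m n 0 q := by
  simp only [evenDerivCoeff, Zfun_zero_left]
  ring

lemma evenDerivCoeff_succ_zero (hp : p + 1 ≤ m) :
    evenDerivCoeff m n (p + 1) 0 = ((m - p : ℕ) : ℝ) ^ 2 * evenDerivCoeff m n p 0 := by
  simp only [evenDerivCoeff, Zfun_zero_right]
  rw [show m - p = m - (p + 1) + 1 by omega, ← div_factorial_succ_mul _ (m - (p + 1))]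
  push_cast
  ring

lemma evenDerivCoeff_succ_succ (hpm : p + 1 ≤ m) (hpn : p + 1 ≤ n) :
    evenDerivCoeff m n (p + 1) (q + 1)
      = ((m - p : ℕ) : ℝ) ^ 2 * evenDerivCoeff m n p (q + 1)
        - ((n - (p + 1) : ℕ) : ℝ) ^ 2 * evenDerivCoeff m n (p + 1) q := by
  simp only [evenDerivCoeff, Zfun_succ_succ]
  rw [show m - p = m - (p + 1) + 1 by omega, ← div_factorial_succ_mul _ (m - (p + 1))]
  push_cast [hpn]
  ring

lemma evenDerivCoeff_eq_ite (hpm : p ≤ m) (hpn : p ≤ n) (h : p + q ≠ 0) :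
    evenDerivCoeff m n p q
      = (if p = 0 then 0 else ((m - (p - 1) : ℕ) : ℝ) ^ 2 * evenDerivCoeff m n (p - 1) q)
        - (if q = 0 then 0 else ((n - p : ℕ) : ℝ) ^ 2 * evenDerivCoeff m n p (q - 1)) := by
  rcases p with _ | p <;> rcases q with _ | q
  · exact absurd rfl h
  · simp [evenDerivCoeff_zero_succ]
  · simp [evenDerivCoeff_succ_zero hpm]
  · simp [evenDerivCoeff_succ_succ hpm hpn]

end evenDerivCoeff

lemma iteratedDeriv_two_Cfun_sub (m n p : ℕ) (hpm : p < m) (hpn : p < n) (θ : ℝ) :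
    iteratedDeriv 2 (Cfun (m - p) (n - p)) θ
      = ((m - p : ℕ) : ℝ) ^ 2 * Cfun (m - (p + 1)) (n - (p + 1)) θ
        - ((n - p : ℕ) : ℝ) ^ 2 * Cfun (m - p) (n - p) θ := by
  rw [show m - p = m - (p + 1) + 1 by omega, show n - p = n - (p + 1) + 1 by omega]
  exact iteratedDeriv_two_Cfun _ _ θ

open Finset in
theorem iteratedDeriv_Cfun_eq_sum_antidiagonal {m n j : ℕ} (hjm : j ≤ m) (hjn : j ≤ n)
    (θ : ℝ) :
    iteratedDeriv (2 * j) (Cfun m n) θ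
      = ∑ x ∈ antidiagonal j, evenDerivCoeff m n x.1 x.2 * Cfun (m - x.1) (n - x.1) θ := by
  induction j generalizing θ with
  | zero => simp [evenDerivCoeff_zero_zero]
  | succ j ih =>
    set G : ℕ → ℝ := fun p => Cfun (m - p) (n - p) θ
    have hsplit : iteratedDeriv (2 * (j + 1)) (Cfun m n) θ
        = iteratedDeriv 2 (iteratedDeriv (2 * j) (Cfun m n)) θ := by
      rw [iteratedDeriv_eq_iterate, iteratedDeriv_eq_iterate, iteratedDeriv_eq_iterate,
        ← Function.iterate_add_apply, mul_add, mul_one, add_comm]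
    calc iteratedDeriv (2 * (j + 1)) (Cfun m n) θ
        = ∑ x ∈ antidiagonal j,
            evenDerivCoeff m n x.1 x.2 * iteratedDeriv 2 (Cfun (m - x.1) (n - x.1)) θ := by
          rw [hsplit, funext (ih (by omega) (by omega)),
            iteratedDeriv_fun_sum fun x _ => contDiffAt_const.mul (contDiff_Cfun _ _).contDiffAt]
          simp only [iteratedDeriv_const_mul_field]
      _ = ∑ x ∈ antidiagonal j,
            ((m - x.1 : ℕ) ^ 2 * evenDerivCoeff m n x.1 x.2 * G (x.1 + 1)
              - (n - x.1 : ℕ) ^ 2 * evenDerivCoeff m n x.1 x.2 * G x.1) := by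
          refine Finset.sum_congr rfl fun x hx => ?_
          have hx := mem_antidiagonal.mp hx
          rw [iteratedDeriv_two_Cfun_sub m n x.1 (by omega) (by omega)]
          ring
      _ = ∑ x ∈ antidiagonal (j + 1), evenDerivCoeff m n x.1 x.2 * G x.1 := by
          rw [← Nat.sum_antidiagonal_succ_ite_mul
            (fun p q => (m - p : ℕ) ^ 2 * evenDerivCoeff m n p q)
            (fun p q => (n - p : ℕ) ^ 2 * evenDerivCoeff m n p q)]
          refine Finset.sum_congr rfl fun x hx => ?_
          have hx := mem_antidiagonal.mp hx
          rw [evenDerivCoeff_eq_ite (p := x.1) (q := x.2) (by omega) (by omega) (by omega)]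

/-- for `0 ≤ j ≤ n`,
`d^{2j}C_{2n,n}/dθ^{2j} = Σ_{k=0}^{j} (−1)^k ((2n)!/(2n−j+k)!)² Z_{j−k,k}(n) C_{2n−j+k,n−j+k}(θ)`. -/
theorem stmt17 (n j : ℕ) (hj : j ≤ n) (θ : ℝ) :
    iteratedDeriv (2 * j) (Cfun (2 * n) n) θ =
      ∑ k ∈ Finset.range (j + 1),
        (-1 : ℝ) ^ k * (((2 * n).factorial : ℝ) / ((2 * n - j + k).factorial : ℝ)) ^ 2 *
          Zfun (j - k) k (n : ℝ) * Cfun (2 * n - j + k) (n - j + k) θ := by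
  rw [iteratedDeriv_Cfun_eq_sum_antidiagonal (by omega) hj, ← Finset.Nat.sum_antidiagonal_swap]
  simp only [Prod.fst_swap, Prod.snd_swap]
  rw [Finset.Nat.sum_antidiagonal_eq_sum_range_succ
    (fun k p => evenDerivCoeff (2 * n) n p k * Cfun (2 * n - p) (n - p) θ)]
  refine Finset.sum_congr rfl fun k hk => ?_
  have hk : k ≤ j := Nat.lt_succ_iff.mp (Finset.mem_range.mp hk)
  rw [evenDerivCoeff, show 2 * n - (j - k) = 2 * n - j + k by omega,
    show n - (j - k) = n - j + k by omega]
end
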